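/- arXiv:1211.5763 — 7 statements merged into one kernel-verified Lean document; each statement's English description precedes it below -/
import Mathlib

section
/- The property of having no middle class is inherited by factor rings: if R has no right middle class and I is a two-sided ideal of R, then R/I has no right middle class. -/
/-!
A module over `R ⧸ I` is an `R`-module on which `R` acts through the quotient map, and along a
surjective ring map `f : R →+* S` such modules have the same linear maps and the same submodules
over `R` as over `S`. Hence a module that is injective over `R` is injective over `S`, relative
injectivity over `S` descends to `R`, and semisimplicity is the same over both rings, so a module
that is poor over `R` is poor over `S`.
-/

universe u v

/-- `M` is `N`-injective. -/
def RelInjective (R : Type u) [Ring R] (M N : Type v) [AddCommGroup M] [Module R M]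
    [AddCommGroup N] [Module R N] : Prop :=
  ∀ (K : Submodule R N) (f : K →ₗ[R] M), ∃ g : N →ₗ[R] M, ∀ x : K, g x = f x

/-- `M` is poor: its injectivity domain consists only of semisimple modules. -/
def Poor (R : Type u) [Ring R] (M : Type v) [AddCommGroup M] [Module R M] : Prop :=
  ∀ (N : Type v) [AddCommGroup N] [Module R N], RelInjective R M N → IsSemisimpleModule R N

/-- `R` has no (right) middle class: every module is injective or poor. -/
def NoMiddleClass (R : Type u) [Ring R] : Prop :=
  ∀ (M : Type v) [AddCommGroup M] [Module R M], Module.Injective R M ∨ Poor R M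

section SMulFactorsThrough

variable {R S : Type*} [Ring R] [Ring S] (f : R →+* S)

def SMulFactorsThrough (M : Type*) [AddCommGroup M] [Module R M] [Module S M] : Prop :=
  ∀ (r : R) (m : M), f r • m = r • m

theorem smulFactorsThrough_compHom (M : Type*) [AddCommGroup M] [Module S M] :
    let := Module.compHom M f
    SMulFactorsThrough f M :=
  fun _ _ => rfl

variable {f} {X Y : Type*} [AddCommGroup X] [Module R X] [Module S X]
  [AddCommGroup Y] [Module R Y] [Module S Y]

def LinearMap.restrictScalarsOfFactors (hX : SMulFactorsThrough f X)
    (hY : SMulFactorsThrough f Y) (g : X →ₗ[S] Y) : X →ₗ[R] Y where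
  toFun := g
  map_add' := g.map_add
  map_smul' r x := by rw [← hX, map_smul, hY, RingHom.id_apply]

def LinearMap.extendScalarsOfFactors (hf : Function.Surjective f) (hX : SMulFactorsThrough f X)
    (hY : SMulFactorsThrough f Y) (g : X →ₗ[R] Y) : X →ₗ[S] Y where
  toFun := g
  map_add' := g.map_add
  map_smul' s x := by
    obtain ⟨r, rfl⟩ := hf s
    rw [hX, map_smul, RingHom.id_apply, hY]

def Submodule.extendScalarsOfFactors (hf : Function.Surjective f) (hX : SMulFactorsThrough f X)
    (K : Submodule R X) : Submodule S X where
  toAddSubmonoid := K.toAddSubmonoid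
  smul_mem' s x hx := by
    obtain ⟨r, rfl⟩ := hf s
    rw [hX]
    exact K.smul_mem r hx

theorem isSemisimpleModule_iff_of_smulFactorsThrough (hf : Function.Surjective f)
    (hX : SMulFactorsThrough f X) : IsSemisimpleModule R X ↔ IsSemisimpleModule S X :=
  have : RingHomSurjective f := ⟨hf⟩
  let e : X →ₛₗ[f] X :=
    { toFun := fun x => x, map_add' := fun _ _ => rfl, map_smul' := fun r x => (hX r x).symm }
  e.isSemisimpleModule_iff_of_bijective Function.bijective_id

variable {M N : Type v} [AddCommGroup M] [Module R M] [Module S M]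
  [AddCommGroup N] [Module R N] [Module S N]

theorem Module.Injective.of_restrictScalars (hf : Function.Surjective f)
    (hM : SMulFactorsThrough f M) (h : Module.Injective R M) : Module.Injective S M := by
  refine ⟨fun X Y _ _ _ _ i hi g => ?_⟩
  let := Module.compHom X f
  let := Module.compHom Y f
  have hX := smulFactorsThrough_compHom f X
  have hY := smulFactorsThrough_compHom f Y
  obtain ⟨e, he⟩ := h.out (i.restrictScalarsOfFactors hX hY) hi (g.restrictScalarsOfFactors hX hM)
  exact ⟨e.extendScalarsOfFactors hf hY hM, he⟩

theorem RelInjective.restrictScalars (hf : Function.Surjective f) (hM : SMulFactorsThrough f M)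
    (hN : SMulFactorsThrough f N) (h : RelInjective S M N) : RelInjective R M N := by
  intro K g
  let gS : K.extendScalarsOfFactors hf hN →ₗ[S] M :=
    { toFun := fun x => g ⟨x, x.2⟩
      map_add' := fun x y => g.map_add ⟨x, x.2⟩ ⟨y, y.2⟩
      map_smul' := fun s x => by
        obtain ⟨r, rfl⟩ := hf s
        rw [RingHom.id_apply, hM, ← map_smul]
        exact congrArg g (Subtype.ext (hN r x)) }
  obtain ⟨G, hG⟩ := h _ gS
  exact ⟨G.restrictScalarsOfFactors hN hM, fun x => hG ⟨x, x.2⟩⟩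

theorem Poor.of_restrictScalars (hf : Function.Surjective f) (hM : SMulFactorsThrough f M)
    (h : Poor R M) : Poor S M := by
  intro N _ _ hMN
  let := Module.compHom N f
  have hN := smulFactorsThrough_compHom f N
  exact (isSemisimpleModule_iff_of_smulFactorsThrough hf hN).mp
    (h N (hMN.restrictScalars hf hM hN))

end SMulFactorsThrough

theorem NoMiddleClass.of_surjective {R S : Type u} [Ring R] [Ring S] {f : R →+* S}
    (hf : Function.Surjective f) (h : NoMiddleClass.{u, v} R) : NoMiddleClass.{u, v} S := by
  intro M _ _
  let := Module.compHom M f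
  have hM := smulFactorsThrough_compHom f M
  exact (h M).imp (·.of_restrictScalars hf hM) (.of_restrictScalars hf hM)

/-- The property of having no middle class is inherited by factor rings: if `R` has no
middle class then so does any quotient `R/I`, i.e. any surjective ring-homomorphic image. -/
theorem stmt_2 (R : Type u) [Ring R] (I : TwoSidedIdeal R)
    (h : NoMiddleClass.{u, v} R) :
    NoMiddleClass.{u, v} I.ringCon.Quotient :=
  h.of_surjective I.ringCon.mk'_surjective
end

section
/- Let p be a prime, F a field, and K a division subring of M_p(F) that properly contains the field of scalar matrices F·I. Then for each i = 1, …, p, the set of i-th rows of the elements of K spans F^p as an F-vector space. -/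
private lemma stmt_4_aux {F D V : Type*} [Field F] [DivisionRing D] [AddCommGroup V]
    [Module F D] [Module F V] [Module D V] [IsScalarTower F D V] :
    Module.finrank F D ∣ Module.finrank F V :=
  ⟨Module.finrank D V, (Module.finrank_mul_finrank F D V).symm⟩

set_option maxHeartbeats 1000000 in
/-- Let `p` be a prime, `F` a field, and `K` a division subring of `M_p(F)` properly
containing the field of scalar matrices.  Then for each `i`, the set of `i`-th rows of
elements of `K` spans `F^p` as an `F`-vector space. -/
theorem stmt_4 (p : ℕ) (hp : p.Prime) (F : Type*) [Field F]
    (K : Subring (Matrix (Fin p) (Fin p) F))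
    (hscalar : ∀ c : F, algebraMap F (Matrix (Fin p) (Fin p) F) c ∈ K)
    (hproper : ∃ A ∈ K, A ∉ Set.range (algebraMap F (Matrix (Fin p) (Fin p) F)))
    (hdiv : ∀ x ∈ K, x ≠ 0 → ∃ y ∈ K, x * y = 1 ∧ y * x = 1) :
    ∀ i : Fin p,
      Submodule.span F {v : Fin p → F | ∃ A ∈ K, v = A i} = ⊤ := by
  intro i
  haveI : NeZero p := ⟨hp.ne_zero⟩
  set M := Matrix (Fin p) (Fin p) F with hM
  -- `K` as a subalgebra
  set A : Subalgebra F M := { K with algebraMap_mem' := hscalar } with hA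
  haveI : Nontrivial A := by
    refine ⟨1, 0, fun h => ?_⟩
    have h1 : (1 : M) = 0 := congrArg Subtype.val h
    exact one_ne_zero h1
  -- division ring structure on A
  letI : DivisionRing A := DivisionRing.ofIsUnitOrEqZero (by
    intro a
    rcases eq_or_ne a 0 with h | h
    · exact Or.inr h
    · left
      have ha : (a : M) ≠ 0 := fun hc => h (Subtype.ext hc)
      obtain ⟨y, hyK, hxy, hyx⟩ := hdiv (a : M) a.2 ha
      exact ⟨⟨a, ⟨y, hyK⟩, Subtype.ext hxy, Subtype.ext hyx⟩, rfl⟩)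
  -- the row map
  let φ : A →ₗ[F] (Fin p → F) :=
    { toFun := fun a => (a : M) i
      map_add' := fun a b => rfl
      map_smul' := fun c a => rfl }
  have hφinj : Function.Injective φ := by
    rw [injective_iff_map_eq_zero]
    intro a ha
    by_contra h
    have haM : (a : M) ≠ 0 := fun hc => h (Subtype.ext hc)
    obtain ⟨y, hyK, hxy, _⟩ := hdiv (a : M) a.2 haM
    have h1 : ((a : M) * y) i i = (1 : M) i i := by rw [hxy]
    rw [Matrix.one_apply_eq, Matrix.mul_apply] at h1
    have hrow : ∀ k, (a : M) i k = 0 := fun k => congrFun ha k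
    simp only [hrow, zero_mul, Finset.sum_const_zero] at h1
    exact zero_ne_one h1
  -- F^p is a module over the division ring A via matrix-vector multiplication
  letI : SMul A (Fin p → F) := ⟨fun a v => (a : M).mulVec v⟩
  haveI hsmul_def : ∀ (a : A) (v : Fin p → F), a • v = (a : M).mulVec v := fun _ _ => rfl
  letI : MulAction A (Fin p → F) :=
    { one_smul := fun v => by rw [hsmul_def]; exact Matrix.one_mulVec v
      mul_smul := fun a b v => by
        rw [hsmul_def, hsmul_def, hsmul_def]
        exact (Matrix.mulVec_mulVec v (a : M) (b : M)).symm }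
  letI : DistribMulAction A (Fin p → F) :=
    { smul_zero := fun a => by rw [hsmul_def]; exact Matrix.mulVec_zero _
      smul_add := fun a v w => by
        rw [hsmul_def, hsmul_def, hsmul_def]; exact Matrix.mulVec_add _ v w }
  letI : Module A (Fin p → F) :=
    { add_smul := fun a b v => by
        rw [hsmul_def, hsmul_def, hsmul_def]; exact Matrix.add_mulVec _ _ v
      zero_smul := fun v => by rw [hsmul_def]; exact Matrix.zero_mulVec v }
  haveI : IsScalarTower F A (Fin p → F) :=
    ⟨fun c a v => by
      rw [hsmul_def, hsmul_def]
      have : ((c • a : A) : M) = c • (a : M) := rfl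
      rw [this]
      exact Matrix.smul_mulVec c (a : M) v⟩
  haveI : FiniteDimensional F A := FiniteDimensional.of_injective φ hφinj
  -- dimension count
  have hVdim : Module.finrank F (Fin p → F) = p := by
    rw [Module.finrank_fintype_fun_eq_card, Fintype.card_fin]
  have hdvd : Module.finrank F A ∣ Module.finrank F (Fin p → F) := by
    exact stmt_4_aux (D := A) (V := Fin p → F)
  rw [hVdim] at hdvd
  have hd : Module.finrank F A = p := by
    rcases (Nat.Prime.eq_one_or_self_of_dvd hp _ hdvd) with h1 | h
    · exfalso
      have hbot : A = ⊥ := Subalgebra.eq_bot_of_finrank_one h1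
      obtain ⟨B, hBK, hBnot⟩ := hproper
      have : B ∈ A := hBK
      rw [hbot, Algebra.mem_bot] at this
      exact hBnot this
    · exact h
  -- conclude
  have hS : {v : Fin p → F | ∃ B ∈ K, v = B i} = Set.range φ := by
    ext v
    constructor
    · rintro ⟨B, hBK, rfl⟩
      exact ⟨⟨B, hBK⟩, rfl⟩
    · rintro ⟨a, rfl⟩
      exact ⟨(a : M), a.2, rfl⟩
  rw [hS, ← LinearMap.coe_range, Submodule.span_eq]
  apply Submodule.eq_top_of_finrank_eq
  rw [LinearMap.finrank_range_of_inj hφinj, hd, hVdim]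
end

section
/- Let p be prime, F a field, and K a division subring of M_p(F) properly containing the scalar matrices F·I. Then K = {c₀I + c₁A + ⋯ + c_{p-1}A^{p-1} : cᵢ ∈ F} for any A ∈ K that is not a scalar matrix; in particular, K is a commutative field of dimension p over F. -/
/-!
Every nonzero element of `K` is an invertible matrix, so `K` is a domain and the minimal
polynomial `m` of a non-scalar `A ∈ K` is irreducible of degree `d ≥ 2`. Through `A`, the space
`F^p` becomes a vector space over the field `F[X]/(m)` of dimension `d` over `F`, hence `d ∣ p`
and `d = p`. On the other hand `x ↦ x v` embeds `K` into `F^p` for any `v ≠ 0`, so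
`dim_F K ≤ p`; since `1, A, …, A^{p-1}` are independent elements of `K`, they span it.
-/

open Polynomial Module

section

variable {F : Type*} [Field F]

theorem Module.End.natDegree_minpoly_dvd_finrank {V : Type*} [AddCommGroup V] [Module F V]
    [FiniteDimensional F V] (f : Module.End F V) (hf : Irreducible (minpoly F f)) :
    (minpoly F f).natDegree ∣ finrank F V := by
  have := Fact.mk hf
  let φ : AdjoinRoot (minpoly F f) →ₐ[F] Module.End F V :=
    Ideal.Quotient.liftₐ _ (aeval f) fun q hq => by
      obtain ⟨r, rfl⟩ := Ideal.mem_span_singleton'.mp hq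
      rw [map_mul, minpoly.aeval, mul_zero]
  let := Module.compHom V φ.toRingHom
  have : IsScalarTower F (AdjoinRoot (minpoly F f)) V :=
    IsScalarTower.of_algebraMap_smul fun c v =>
      congr($(φ.commutes c) v).trans (Module.algebraMap_end_apply F F V c v)
  have hdeg := (AdjoinRoot.powerBasis (minpoly.ne_zero_of_finite F f)).finrank
  rw [AdjoinRoot.powerBasis_dim] at hdeg
  exact hdeg ▸ Module.finrank_dvd_finrank_right F (AdjoinRoot (minpoly F f)) V

theorem Matrix.natDegree_minpoly_dvd_card {n : Type*} [Fintype n] [DecidableEq n]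
    (A : Matrix n n F) (hA : Irreducible (minpoly F A)) :
    (minpoly F A).natDegree ∣ Fintype.card n := by
  rw [← Matrix.minpoly_toLin'] at hA ⊢
  simpa using Module.End.natDegree_minpoly_dvd_finrank _ hA

theorem Subalgebra.irreducible_minpoly_of_forall_isUnit {R : Type*} [Ring R] [Nontrivial R]
    [Algebra F R] (S : Subalgebra F R) (hS : ∀ x ∈ S, x ≠ 0 → IsUnit x) {a : R} (ha : a ∈ S)
    (hint : IsIntegral F a) : Irreducible (minpoly F a) := by
  have : NoZeroDivisors S := ⟨fun {x y} hxy => or_iff_not_imp_left.mpr fun hx => Subtype.ext <|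
    (hS x x.2 (by simpa using hx)).mul_left_cancel (by simpa using congr(Subtype.val $hxy))⟩
  have : IsDomain S := NoZeroDivisors.to_isDomain S
  exact minpoly.algHom_eq S.val Subtype.val_injective ⟨a, ha⟩ ▸
    minpoly.irreducible ((isIntegral_algHom_iff S.val Subtype.val_injective).mp hint)

theorem Matrix.finrank_le_card_of_forall_isUnit {n : Type*} [Fintype n] [DecidableEq n]
    [Nonempty n] (S : Submodule F (Matrix n n F)) (hS : ∀ x ∈ S, x ≠ 0 → IsUnit x) :
    finrank F S ≤ Fintype.card n := by
  obtain ⟨v, hv⟩ := exists_ne (0 : n → F)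
  let evalAt : S →ₗ[F] n → F := LinearMap.applyₗ v ∘ₗ Matrix.toLin'.toLinearMap ∘ₗ S.subtype
  have : Function.Injective evalAt := by
    refine (injective_iff_map_eq_zero _).mpr fun x hx => ?_
    by_contra hx0
    have := Matrix.mulVec_injective_iff_isUnit.mpr (hS x x.2 (by simpa using hx0))
    exact hv (this (by simpa [evalAt] using hx))
  simpa using LinearMap.finrank_le_finrank_of_injective this

theorem Matrix.natDegree_minpoly_eq_card_of_prime {n : Type*} [Fintype n] [DecidableEq n]
    (S : Subalgebra F (Matrix n n F)) (hS : ∀ x ∈ S, x ≠ 0 → IsUnit x)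
    (hn : (Fintype.card n).Prime) {A : Matrix n n F} (hA : A ∈ S)
    (hAs : A ∉ Set.range (algebraMap F (Matrix n n F))) :
    (minpoly F A).natDegree = Fintype.card n := by
  have : Nonempty n := Fintype.card_pos_iff.mp hn.pos
  have hint := Algebra.IsIntegral.isIntegral (R := F) A
  have htwo := (minpoly.two_le_natDegree_iff hint).mpr hAs
  have hdvd := A.natDegree_minpoly_dvd_card (S.irreducible_minpoly_of_forall_isUnit hS hA hint)
  exact (hn.eq_one_or_self_of_dvd _ hdvd).resolve_left (by omega)

theorem Subalgebra.toSubmodule_eq_span_pow_of_finrank_le {R : Type*} [Ring R] [Algebra F R]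
    [FiniteDimensional F R] (S : Subalgebra F R) {a : R} (ha : a ∈ S)
    (h : finrank F (Subalgebra.toSubmodule S) ≤ (minpoly F a).natDegree) :
    Subalgebra.toSubmodule S =
      Submodule.span F (Set.range fun i : Fin (minpoly F a).natDegree => a ^ (i : ℕ)) := by
  refine (Submodule.eq_of_le_of_finrank_le ?_ ?_).symm
  · exact Submodule.span_le.mpr (Set.range_subset_iff.mpr fun i => S.pow_mem ha _)
  · rwa [finrank_span_eq_card (linearIndependent_pow a), Fintype.card_fin]

theorem commute_of_mem_span_pow {R : Type*} [Ring R] [Algebra F R] {a x y : R} {k : ℕ}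
    (hx : x ∈ Submodule.span F (Set.range fun i : Fin k => a ^ (i : ℕ)))
    (hy : y ∈ Submodule.span F (Set.range fun i : Fin k => a ^ (i : ℕ))) : Commute x y := by
  have hle : Submodule.span F (Set.range fun i : Fin k => a ^ (i : ℕ)) ≤
      Subalgebra.toSubmodule (Algebra.adjoin F {a}) :=
    Submodule.span_le.mpr (Set.range_subset_iff.mpr fun i =>
      Subalgebra.pow_mem _ (Algebra.self_mem_adjoin_singleton F a) _)
  exact Algebra.commute_of_mem_adjoin_singleton_of_commute (hle hy)
    (Algebra.commute_of_mem_adjoin_self (hle hx)).symm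

end

theorem stmt_6_general (p : ℕ) (hp : p.Prime) (F : Type*) [Field F]
    (K : Subring (Matrix (Fin p) (Fin p) F))
    (hscalar : ∀ c : F, algebraMap F (Matrix (Fin p) (Fin p) F) c ∈ K)
    (hdiv : ∀ x ∈ K, x ≠ 0 → ∃ y ∈ K, x * y = 1 ∧ y * x = 1)
    (A : Matrix (Fin p) (Fin p) F) (hA : A ∈ K)
    (hAs : A ∉ Set.range (algebraMap F (Matrix (Fin p) (Fin p) F))) :
    (K : Set (Matrix (Fin p) (Fin p) F)) =
      {B | ∃ c : Fin p → F, B = ∑ i : Fin p, c i • A ^ (i : ℕ)} ∧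
    (∀ x ∈ K, ∀ y ∈ K, x * y = y * x) ∧
    Module.finrank F (Submodule.span F (K : Set (Matrix (Fin p) (Fin p) F))) = p := by
  have : NeZero p := ⟨hp.ne_zero⟩
  let S : Subalgebra F (Matrix (Fin p) (Fin p) F) := { K with algebraMap_mem' := hscalar }
  have hunit : ∀ x ∈ S, x ≠ 0 → IsUnit x := fun x hx hx0 =>
    let ⟨y, _, hxy, hyx⟩ := hdiv x hx hx0
    ⟨⟨x, y, hxy, hyx⟩, rfl⟩
  have hdeg : (minpoly F A).natDegree = p := by
    simpa using Matrix.natDegree_minpoly_eq_card_of_prime S hunit (by simpa using hp) hA hAs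
  have hrank : finrank F (Subalgebra.toSubmodule S) ≤ (minpoly F A).natDegree := by
    simpa [hdeg] using Matrix.finrank_le_card_of_forall_isUnit (Subalgebra.toSubmodule S) hunit
  have hspan := S.toSubmodule_eq_span_pow_of_finrank_le hA hrank
  have hli := linearIndependent_pow (K := F) A
  rw [hdeg] at hspan hli
  have hmem : ∀ B, B ∈ K ↔ B ∈ Submodule.span F (Set.range fun i : Fin p => A ^ (i : ℕ)) :=
    SetLike.ext_iff.mp hspan
  refine ⟨?_, ?_, ?_⟩
  · ext B
    simp [hmem, Submodule.mem_span_range_iff_exists_fun, eq_comm]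
  · exact fun x hx y hy => commute_of_mem_span_pow ((hmem x).mp hx) ((hmem y).mp hy)
  · rw [show Submodule.span F (K : Set _) = Subalgebra.toSubmodule S from
      Submodule.span_eq (Subalgebra.toSubmodule S), hspan, finrank_span_eq_card hli,
      Fintype.card_fin]

/-- Let `p` be prime and `K` a division subring of `M_p(F)` properly containing the scalar
matrices.  Then for any non-scalar `A ∈ K`, one has
`K = {c₀I + c₁A + ⋯ + c_{p-1}A^{p-1} : cᵢ ∈ F}`; in particular `K` is commutative and has
dimension `p` over `F`. -/
theorem stmt_6 (p : ℕ) (hp : p.Prime) (F : Type*) [Field F]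
    (K : Subring (Matrix (Fin p) (Fin p) F))
    (hscalar : ∀ c : F, algebraMap F (Matrix (Fin p) (Fin p) F) c ∈ K)
    (hproper : ∃ B ∈ K, B ∉ Set.range (algebraMap F (Matrix (Fin p) (Fin p) F)))
    (hdiv : ∀ x ∈ K, x ≠ 0 → ∃ y ∈ K, x * y = 1 ∧ y * x = 1)
    (A : Matrix (Fin p) (Fin p) F) (hA : A ∈ K)
    (hAs : A ∉ Set.range (algebraMap F (Matrix (Fin p) (Fin p) F))) :
    (K : Set (Matrix (Fin p) (Fin p) F)) =
      {B | ∃ c : Fin p → F, B = ∑ i : Fin p, c i • A ^ (i : ℕ)} ∧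
    (∀ x ∈ K, ∀ y ∈ K, x * y = y * x) ∧
    Module.finrank F (Submodule.span F (K : Set (Matrix (Fin p) (Fin p) F))) = p :=
  stmt_6_general p hp F K hscalar hdiv A hA hAs
end

section
/- Let R be a commutative Noetherian ring, and P, Q prime ideals of R. If P is not contained in Q, then Hom_R(E(R/P), E(R/Q)) = 0, where E denotes injective hull. -/
/-!
Pick `x ∈ P \ Q`. Since `x` kills `R/P`, which is essential in `E(R/P)`, every element of
`E(R/P)` is killed by a power of `x`: along the stabilized chain of annihilators
`ann(x ^ n • e)`, the element `e' = x ^ N • e` has `ann(e') = ann(x • e')`, so `x` acts injectively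
on `R e'`, while the essential submodule `R/P` forces a nonzero element of `R e'` killed by `x`
unless `e' = 0`. On the other hand a power of `x` acts injectively on the domain `R/Q`, so the
image of a map `E(R/P) → E(R/Q)` meets the essential submodule `R/Q` trivially, hence vanishes.
-/

universe u v

/-- A submodule `K ≤ M` is essential if it intersects every nonzero submodule nontrivially. -/
def IsEssentialSubmodule {R : Type u} [Ring R] {M : Type v} [AddCommGroup M] [Module R M]
    (K : Submodule R M) : Prop :=
  ∀ P : Submodule R M, P ⊓ K = ⊥ → P = ⊥

/-- `E` is an injective hull of `M`: `E` is an injective module containing (a copy of) `M`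
as an essential submodule. -/
def IsInjectiveHull (R : Type u) [Ring R] (M : Type*) [AddCommGroup M] [Module R M]
    (E : Type v) [AddCommGroup E] [Module R E] : Prop :=
  Module.Injective R E ∧
    ∃ f : M →ₗ[R] E, Function.Injective f ∧ IsEssentialSubmodule (LinearMap.range f)

section Essential

variable {R : Type u} [CommRing R] {M : Type v} [AddCommGroup M] [Module R M]
  {K : Submodule R M}

lemma IsEssentialSubmodule.eq_zero_of_forall_smul_smul_eq_zero (hK : IsEssentialSubmodule K)
    {x : R} (hx : ∀ k ∈ K, x • k = 0) {e : M} (he : ∀ s : R, s • x • e = 0 → s • e = 0) :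
    e = 0 := by
  rw [← Submodule.span_singleton_eq_bot (R := R)]
  refine hK _ (eq_bot_iff.mpr ?_)
  rintro z ⟨hz, hzK⟩
  obtain ⟨s, rfl⟩ := Submodule.mem_span_singleton.mp hz
  rw [Submodule.mem_bot]
  exact he s (by rw [smul_comm, hx _ hzK])

lemma IsEssentialSubmodule.exists_pow_smul_eq_zero [IsNoetherianRing R]
    (hK : IsEssentialSubmodule K) {x : R} (hx : ∀ k ∈ K, x • k = 0) (e : M) :
    ∃ n : ℕ, x ^ n • e = 0 := by
  let ann : ℕ →o Ideal R :=
    ⟨fun n => LinearMap.ker (LinearMap.toSpanSingleton R M (x ^ n • e)),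
      monotone_nat_of_le_succ fun n s hs => by
        simp only [LinearMap.mem_ker, LinearMap.toSpanSingleton_apply] at hs ⊢
        rw [pow_succ', mul_smul, smul_comm, hs, smul_zero]⟩
  obtain ⟨N, hN⟩ := monotone_stabilizes_iff_noetherian.mpr (inferInstance : IsNoetherian R R) ann
  refine ⟨N, hK.eq_zero_of_forall_smul_smul_eq_zero hx fun s hs => ?_⟩
  have hs' : s ∈ ann (N + 1) := by
    change s • x ^ (N + 1) • e = 0
    rwa [pow_succ', mul_smul]
  rwa [← hN (N + 1) N.le_succ] at hs'

end Essential

section Quotient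

variable {R : Type u} [CommRing R] {M : Type v} [AddCommGroup M] [Module R M]

lemma Ideal.Quotient.smul_eq_zero_of_mem_range {P : Ideal R} (g : (R ⧸ P) →ₗ[R] M) {x : R}
    (hx : x ∈ P) : ∀ k ∈ LinearMap.range g, x • k = 0 := by
  rintro _ ⟨a, rfl⟩
  obtain ⟨a, rfl⟩ := Ideal.Quotient.mk_surjective a
  have hxa : x • (Ideal.Quotient.mk P a) = Ideal.Quotient.mk P (x * a) := rfl
  rw [← map_smul, hxa, Ideal.Quotient.eq_zero_iff_mem.mpr (P.mul_mem_right a hx), map_zero]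

lemma Ideal.Quotient.eq_zero_of_smul_eq_zero {Q : Ideal R} (hQ : Q.IsPrime) {x : R} (hx : x ∉ Q)
    {y : R ⧸ Q} (h : x • y = 0) : y = 0 := by
  obtain ⟨a, rfl⟩ := Ideal.Quotient.mk_surjective y
  have hxa : x • (Ideal.Quotient.mk Q a) = Ideal.Quotient.mk Q (x * a) := rfl
  rw [hxa, Ideal.Quotient.eq_zero_iff_mem] at h
  exact Ideal.Quotient.eq_zero_iff_mem.mpr ((hQ.mem_or_mem h).resolve_left hx)

end Quotient

theorem stmt_13_general (R : Type u) [CommRing R] [IsNoetherianRing R]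
    (P Q : Ideal R) (hQ : Q.IsPrime) (hPQ : ¬ P ≤ Q)
    (E₁ : Type v) [AddCommGroup E₁] [Module R E₁] (hE₁ : IsInjectiveHull R (R ⧸ P) E₁)
    (E₂ : Type v) [AddCommGroup E₂] [Module R E₂] (hE₂ : IsInjectiveHull R (R ⧸ Q) E₂) :
    ∀ f : E₁ →ₗ[R] E₂, f = 0 := by
  intro f
  obtain ⟨-, g₁, -, hess₁⟩ := hE₁
  obtain ⟨-, g₂, hg₂, hess₂⟩ := hE₂
  obtain ⟨x, hxP, hxQ⟩ := Set.not_subset.mp hPQ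
  rw [← LinearMap.range_eq_bot]
  refine hess₂ _ (eq_bot_iff.mpr ?_)
  rintro _ ⟨⟨e, rfl⟩, y, hy⟩
  obtain ⟨n, hn⟩ :=
    hess₁.exists_pow_smul_eq_zero (Ideal.Quotient.smul_eq_zero_of_mem_range g₁ hxP) e
  have hxy : x ^ n • y = 0 := hg₂ (by rw [map_smul, hy, ← map_smul, hn, map_zero, map_zero])
  rw [Submodule.mem_bot, ← hy,
    Ideal.Quotient.eq_zero_of_smul_eq_zero hQ (fun h => hxQ (hQ.mem_of_pow_mem n h)) hxy, map_zero]

/-- Let `R` be a commutative Noetherian ring and `P`, `Q` prime ideals with `P ⊄ Q`.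
Then `Hom_R(E(R/P), E(R/Q)) = 0`. -/
theorem stmt_13 (R : Type u) [CommRing R] [IsNoetherianRing R]
    (P Q : Ideal R) (hP : P.IsPrime) (hQ : Q.IsPrime) (hPQ : ¬ P ≤ Q)
    (E₁ : Type v) [AddCommGroup E₁] [Module R E₁] (hE₁ : IsInjectiveHull R (R ⧸ P) E₁)
    (E₂ : Type v) [AddCommGroup E₂] [Module R E₂] (hE₂ : IsInjectiveHull R (R ⧸ Q) E₂) :
    ∀ f : E₁ →ₗ[R] E₂, f = 0 :=
  stmt_13_general R P Q hQ hPQ E₁ hE₁ E₂ hE₂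
end

section
/- A commutative ring whose every simple module is injective (a commutative V-ring) is von Neumann regular; consequently, a commutative local V-ring is a field. -/
/-!
Let `R ⧸ m` be injective and `a ∈ m`. If every annihilator of `a` lay in `m`, the map
`r • a ↦ r mod m` on the ideal `(a)` would be well defined and, by Baer's criterion, extend to `R`;
the extension sends `a = a • 1` into `a • (R ⧸ m) = 0`, but also to `1 mod m`. So some `r ∉ m`
kills `a`. If `a` were not von Neumann regular, the ideal `{r | r * a ∈ (a²)}` would be proper
and lie in a maximal ideal `m` containing `a` and every annihilator of `a`, which is impossible.
In a local ring, `a = a * x * a` forces `a = 0` or `a` a unit, according as `1 - x * a` or `x * a`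
is a unit.
-/

universe u

theorem Ideal.exists_notMem_mul_eq_zero_of_injective_quotient {R : Type u} [CommRing R]
    {I : Ideal R} (hI : I ≠ ⊤) [Module.Injective R (R ⧸ I)] {a : R} (ha : a ∈ I) :
    ∃ r ∉ I, r * a = 0 := by
  by_contra! h
  have hle : Ideal.torsionOf R R a ≤ I := fun r hr => by_contra fun hrI => h r hrI hr
  let g : (R ∙ a) →ₗ[R] R ⧸ I :=
    Submodule.factor hle ∘ₗ (Ideal.quotTorsionOfEquivSpanSingleton R R a).symm.toLinearMap
  obtain ⟨f, hf⟩ := Module.Baer.of_injective ‹_› (R ∙ a) g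
  have haa : a ∈ R ∙ a := Submodule.mem_span_singleton_self a
  have hga : g ⟨a, haa⟩ = Submodule.Quotient.mk 1 := by
    have : (Ideal.quotTorsionOfEquivSpanSingleton R R a).symm ⟨a, haa⟩ =
        Submodule.Quotient.mk 1 := by
      rw [LinearEquiv.symm_apply_eq, Ideal.quotTorsionOfEquivSpanSingleton_apply_mk, one_smul]
    simp only [g, LinearMap.comp_apply, LinearEquiv.coe_coe, this]
    rfl
  have hfa : f a = 0 := by
    obtain ⟨c, hc⟩ := Submodule.Quotient.mk_surjective I (f 1)
    rw [← mul_one a, ← smul_eq_mul, map_smul, ← hc, ← Submodule.Quotient.mk_smul,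
      Submodule.Quotient.mk_eq_zero, smul_eq_mul]
    exact I.mul_mem_right c ha
  refine hI ((Ideal.eq_top_iff_one I).2 ((Submodule.Quotient.mk_eq_zero I).1 ?_))
  rw [← hga, ← hf, hfa]

theorem exists_eq_mul_mul_self_of_forall_injective_quotient {R : Type u} [CommRing R]
    (h : ∀ m : Ideal R, m.IsMaximal → Module.Injective R (R ⧸ m)) (a : R) :
    ∃ x : R, a = a * x * a := by
  by_contra! hreg
  set K : Ideal R := (Ideal.span {a * a}).colon (Ideal.span {a})
  have hK : ∀ {r : R}, r ∈ K ↔ r * a ∈ Ideal.span {a * a} := by simp [K]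
  have hKne : K ≠ ⊤ := fun hK1 => by
    obtain ⟨x, hx⟩ := Ideal.mem_span_singleton'.1 (hK.1 (hK1 ▸ Submodule.mem_top : (1 : R) ∈ K))
    exact hreg x (by linear_combination -hx)
  obtain ⟨m, hm, hKm⟩ := Ideal.exists_le_maximal K hKne
  have : Module.Injective R (R ⧸ m) := h m hm
  obtain ⟨r, hr, hra⟩ := Ideal.exists_notMem_mul_eq_zero_of_injective_quotient hm.ne_top
    (hKm (hK.2 (Ideal.mem_span_singleton_self _)))
  exact hr (hKm (hK.2 (hra ▸ Submodule.zero_mem _)))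

theorem IsLocalRing.isUnit_or_eq_zero_of_eq_mul_mul_self {R : Type u} [CommRing R]
    [IsLocalRing R] {a x : R} (h : a = a * x * a) : IsUnit a ∨ a = 0 := by
  rcases IsLocalRing.isUnit_or_isUnit_one_sub_self (x * a) with hu | hu
  · exact .inl (isUnit_of_mul_isUnit_right hu)
  · exact .inr ((hu.mul_left_eq_zero).1 (by linear_combination h))

/-- A commutative ring all of whose simple modules are injective (a commutative V-ring)
is von Neumann regular; consequently, a commutative local V-ring is a field. -/
theorem stmt_15 (R : Type u) [CommRing R]
    (hV : ∀ (M : Type u) [AddCommGroup M] [Module R M], IsSimpleModule R M →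
      Module.Injective R M) :
    (∀ a : R, ∃ x : R, a = a * x * a) ∧ (IsLocalRing R → IsField R) := by
  have hreg := exists_eq_mul_mul_self_of_forall_injective_quotient fun m hm =>
    hV (R ⧸ m) (isSimpleModule_iff_isCoatom.2 (Ideal.isMaximal_def.1 hm))
  refine ⟨hreg, fun _ => ⟨⟨0, 1, zero_ne_one⟩, mul_comm, fun {a} ha => ?_⟩⟩
  obtain ⟨x, hx⟩ := hreg a
  exact ((IsLocalRing.isUnit_or_eq_zero_of_eq_mul_mul_self hx).resolve_right ha).exists_right_inv
end

section
/- Let R be a commutative Noetherian ring and 𝔓 a maximal ideal such that R/𝔓 is an injective R-module. Then the localization R_𝔓 is a field; in particular 𝔓 contains no prime ideal properly and 𝔓^k·R_𝔓 = 𝔓·R_𝔓 for all k ≥ 1. -/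
/-!
Injectivity of `R ⧸ P` extends every `R`-linear map `P → R ⧸ P` to `R`, where it is
multiplication by the image of `1`, so it vanishes on `P`. Hence the `R ⧸ P`-vector space
`P ⧸ P²` has no nonzero functionals, i.e. `P² = P`. In the Noetherian local ring `R_P` the
maximal ideal is then idempotent, so it is zero by Nakayama.
-/

universe u

namespace Ideal

variable {R : Type*} [CommRing R]

theorem linearMap_quotient_eq_zero_of_injective (I : Ideal R) [Module.Injective R (R ⧸ I)]
    (f : I →ₗ[R] R ⧸ I) : f = 0 := by
  obtain ⟨ψ, hψ⟩ := Module.Baer.of_injective inferInstance I f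
  ext ⟨x, hx⟩
  rw [LinearMap.zero_apply]
  calc f ⟨x, hx⟩ = ψ (x * 1) := by rw [mul_one, hψ x hx]
    _ = Quotient.mk I x * ψ 1 := by
      rw [← smul_eq_mul, map_smul, Algebra.smul_def, Quotient.algebraMap_eq]
    _ = 0 := by rw [Quotient.eq_zero_iff_mem.mpr hx, zero_mul]

theorem isIdempotentElem_of_injective_quotient (I : Ideal R) [I.IsMaximal]
    [Module.Injective R (R ⧸ I)] : IsIdempotentElem I := by
  let := Quotient.field I
  rw [← cotangent_subsingleton_iff]
  refine subsingleton_of_forall_eq 0 fun v => ?_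
  refine (Module.forall_dual_apply_eq_zero_iff (R ⧸ I) v).1 fun φ => ?_
  obtain ⟨x, rfl⟩ := I.toCotangent_surjective v
  exact LinearMap.congr_fun
    (linearMap_quotient_eq_zero_of_injective I ((φ.restrictScalars R).comp I.toCotangent)) x

end Ideal

theorem IsLocalRing.isField_of_isIdempotentElem_maximalIdeal {R : Type*} [CommRing R]
    [IsLocalRing R] [IsNoetherianRing R] (h : IsIdempotentElem (maximalIdeal R)) :
    IsField R :=
  subsingleton_cotangentSpace_iff.mp ((maximalIdeal R).cotangent_subsingleton_iff.mpr h)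

namespace Localization.AtPrime

variable {R : Type*} [CommRing R]

theorem isField_of_isIdempotentElem [IsNoetherianRing R] (P : Ideal R) [P.IsPrime]
    (h : IsIdempotentElem P) : IsField (Localization.AtPrime P) := by
  have : IsNoetherianRing (Localization.AtPrime P) :=
    IsLocalization.isNoetherianRing P.primeCompl _ inferInstance
  refine IsLocalRing.isField_of_isIdempotentElem_maximalIdeal ?_
  rw [← map_eq_maximalIdeal, IsIdempotentElem, ← Ideal.map_mul, h.eq]

theorem eq_of_le_of_isField {P Q : Ideal R} [P.IsPrime] [Q.IsPrime] (hQP : Q ≤ P)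
    (h : IsField (Localization.AtPrime P)) : Q = P := by
  have hbot := IsLocalRing.isField_iff_maximalIdeal_eq.mp h
  have hmapQ : Q.map (algebraMap R (Localization.AtPrime P)) = IsLocalRing.maximalIdeal _ := by
    rw [hbot, ← le_bot_iff, ← hbot, ← map_eq_maximalIdeal]
    exact Ideal.map_mono hQP
  calc Q = (Q.map (algebraMap R (Localization.AtPrime P))).under R :=
        (Ideal.under_map_of_isLocalizationAtPrime P hQP).symm
    _ = P := by rw [hmapQ, under_maximalIdeal]

end Localization.AtPrime

/-- Let `R` be a commutative Noetherian ring and `𝔓` a maximal ideal such that `R/𝔓` is an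
injective `R`-module.  Then the localization `R_𝔓` is a field; in particular `𝔓` contains
no prime ideal properly, and `𝔓^k R_𝔓 = 𝔓 R_𝔓` for all `k ≥ 1`. -/
theorem stmt_16 (R : Type u) [CommRing R] [IsNoetherianRing R]
    (P : Ideal R) [hPp : P.IsPrime] (hP : P.IsMaximal)
    (hinj : Module.Injective R (R ⧸ P)) :
    IsField (Localization.AtPrime P) ∧
    (∀ Q : Ideal R, Q.IsPrime → Q ≤ P → Q = P) ∧
    (∀ k : ℕ, 1 ≤ k →
      Ideal.map (algebraMap R (Localization.AtPrime P)) (P ^ k) =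
        Ideal.map (algebraMap R (Localization.AtPrime P)) P) := by
  have hidem := P.isIdempotentElem_of_injective_quotient
  have hfield := Localization.AtPrime.isField_of_isIdempotentElem P hidem
  exact ⟨hfield, fun Q _ hQP => Localization.AtPrime.eq_of_le_of_isField hQP hfield,
    fun k hk => by rw [hidem.pow_eq (by omega)]⟩
end

section
/- Let T be a commutative indecomposable Artinian ring that is SI (every singular T-module is injective). Then T is a field. (Key step: if T is local Artinian, not a field, then a minimal nonzero ideal A is isomorphic to T/J(T), which is singular, hence injective, hence a direct summand of T, contradicting indecomposability.) -/
universe u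

/-- A module `M` is singular if every element is annihilated by an essential ideal. -/
def IsSingularModule (T : Type u) [CommRing T] (M : Type u) [AddCommGroup M]
    [Module T M] : Prop :=
  ∀ x : M, ∃ I : Ideal T, (∀ J : Ideal T, J ⊓ I = ⊥ → J = ⊥) ∧ ∀ r ∈ I, r • x = 0

/-!
Without nontrivial idempotents an Artinian ring is local: by Fitting's lemma every element is
nilpotent or a unit. If its maximal ideal `𝔪` were nonzero, it would be essential, and a minimal
nonzero ideal `A` would satisfy `𝔪 A = 0` by Nakayama. So `A` is singular, hence injective, hence
a direct summand of `T`; but a local ring has no proper nonzero direct summands, and `A = T`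
would force `𝔪 = 𝔪 A = 0`.
-/

open IsLocalRing

theorem Submodule.exists_isCompl_of_injective {R M : Type*} [Ring R] [AddCommGroup M]
    [Module R M] (N : Submodule R M) [Module.Injective R N] :
    ∃ N' : Submodule R M, IsCompl N N' := by
  obtain ⟨f, hf⟩ := Module.Injective.out N.subtype N.injective_subtype LinearMap.id
  exact ⟨LinearMap.ker f, LinearMap.isCompl_of_proj hf⟩

namespace IsLocalRing

variable {R : Type*} [CommRing R] [IsLocalRing R]

theorem eq_bot_or_eq_top_of_isCompl {I J : Ideal R} (h : IsCompl I J) : I = ⊥ ∨ I = ⊤ := by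
  by_cases hI : I = ⊤
  · exact .inr hI
  by_cases hJ : J = ⊤
  · exact .inl (by simpa [hJ] using h.inf_eq_bot)
  have hIJ : I ⊔ J ≤ maximalIdeal R := sup_le (le_maximalIdeal hI) (le_maximalIdeal hJ)
  rw [h.sup_eq_top, top_le_iff] at hIJ
  exact ((maximalIdeal.isMaximal R).ne_top hIJ).elim

theorem eq_bot_of_inf_maximalIdeal_eq_bot (hm : maximalIdeal R ≠ ⊥) {I : Ideal R}
    (hI : I ⊓ maximalIdeal R = ⊥) : I = ⊥ := by
  by_cases hI_top : I = ⊤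
  · exact (hm (by simpa [hI_top] using hI)).elim
  · simpa [inf_eq_left.mpr (le_maximalIdeal hI_top)] using hI

end IsLocalRing

namespace IsArtinianRing

variable {R : Type*} [CommRing R] [IsArtinianRing R]

theorem isNilpotent_or_isUnit (hR : ∀ e : R, IsIdempotentElem e → e = 0 ∨ e = 1) (r : R) :
    IsNilpotent r ∨ IsUnit r := by
  obtain ⟨n, y, hy⟩ := IsArtinian.exists_pow_succ_smul_dvd r (1 : R)
  simp only [smul_eq_mul, mul_one, Nat.succ_eq_add_one] at hy
  have hfix : ∀ k : ℕ, r ^ n * (r * y) ^ k = r ^ n := by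
    intro k
    induction k with
    | zero => simp
    | succ k ih => rw [pow_succ, ← mul_assoc, ih]; linear_combination hy
  have he : IsIdempotentElem ((r * y) ^ n) :=
    calc (r * y) ^ n * (r * y) ^ n = r ^ n * (r * y) ^ n * y ^ n := by ring
      _ = (r * y) ^ n := by rw [hfix, mul_pow]
  rcases hR _ he with h0 | h1
  · exact .inl ⟨n, by rw [← hfix n, h0, mul_zero]⟩
  · refine .inr (.of_mul_eq_one (r ^ n * y ^ (n + 1)) ?_)
    calc r * (r ^ n * y ^ (n + 1)) = r ^ (n + 1) * y * y ^ n := by ring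
      _ = 1 := by rw [hy, ← mul_pow, h1]

theorem isLocalRing_of_forall_isIdempotentElem [Nontrivial R]
    (hR : ∀ e : R, IsIdempotentElem e → e = 0 ∨ e = 1) : IsLocalRing R :=
  .of_isUnit_or_isUnit_one_sub_self fun r ↦
    (isNilpotent_or_isUnit hR r).elim (fun h ↦ .inr h.isUnit_one_sub) .inl

theorem exists_ne_bot_maximalIdeal_mul_eq_bot [IsLocalRing R] :
    ∃ A : Ideal R, A ≠ ⊥ ∧ maximalIdeal R * A = ⊥ := by
  obtain ⟨A, hA, -⟩ := (eq_bot_or_exists_atom_le (⊤ : Ideal R)).resolve_left top_ne_bot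
  refine ⟨A, hA.1, (hA.le_iff.mp Ideal.mul_le_right).resolve_right fun hmA ↦ hA.1 ?_⟩
  exact Submodule.eq_bot_of_le_smul_of_le_jacobson_bot _ A (IsNoetherian.noetherian A)
    hmA.ge (maximalIdeal_le_jacobson _)

end IsArtinianRing

/-- A commutative indecomposable Artinian ring that is SI (every singular module is
injective) is a field. -/
theorem stmt_18 (T : Type u) [CommRing T] [Nontrivial T] [IsArtinianRing T]
    (hindec : ∀ e : T, IsIdempotentElem e → e = 0 ∨ e = 1)
    (hSI : ∀ (M : Type u) [AddCommGroup M] [Module T M], IsSingularModule T M →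
      Module.Injective T M) :
    IsField T := by
  have := IsArtinianRing.isLocalRing_of_forall_isIdempotentElem hindec
  rw [isField_iff_maximalIdeal_eq]
  by_contra hm
  obtain ⟨A, hA, hmA⟩ := IsArtinianRing.exists_ne_bot_maximalIdeal_mul_eq_bot (R := T)
  have : Module.Injective T A := hSI A fun x ↦
    ⟨maximalIdeal T, fun _ ↦ eq_bot_of_inf_maximalIdeal_eq_bot hm,
      fun r hr ↦ Subtype.ext (by simpa [hmA] using Ideal.mul_mem_mul hr x.2)⟩
  obtain ⟨B, hAB⟩ := A.exists_isCompl_of_injective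
  rcases eq_bot_or_eq_top_of_isCompl hAB with rfl | rfl
  · exact hA rfl
  · exact hm (by simpa using hmA)
end
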